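/- arXiv:math/0312507 — 2 statements merged into one kernel-verified Lean document; each statement's English description precedes it below -/
import Mathlib

section
/- Let (g, r) be a factorisable Lie bialgebra. Then T(g) ≅ D(g) ▶◀ g as Lie bialgebras: T(g) is isomorphic to the twisting of D(g) ⊕ g by the cocycle χ_AC + χ_BC = (r_AC − τ(r_AC)) + (r_BC − τ(r_BC)), where D(g) is identified with the twisting (g⊕g)_{χ_AB} of the first two copies of g. -/
open TensorProduct LinearMap Module

namespace Trip

variable {k : Type*} [Field k]
variable {M : Type*} [AddCommGroup M] [Module k M]

variable (k M) in
/-- The tensor flip `τ`. -/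
noncomputable def τ : M ⊗[k] M ≃ₗ[k] M ⊗[k] M := TensorProduct.comm k M M

variable (k M) in
/-- Cyclic rotation `x⊗y⊗z ↦ z⊗x⊗y` on the triple tensor product. -/
noncomputable def ρ : M ⊗[k] (M ⊗[k] M) ≃ₗ[k] M ⊗[k] (M ⊗[k] M) :=
  (TensorProduct.assoc k M M M).symm ≪≫ₗ TensorProduct.comm k (M ⊗[k] M) M

/-- The bracket as a map on the tensor square. -/
noncomputable def brM (B : M →ₗ[k] M →ₗ[k] M) : M ⊗[k] M →ₗ[k] M := TensorProduct.lift B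

variable (B : M →ₗ[k] M →ₗ[k] M)

/-- `(a⊗b)⊗(c⊗d) ↦ [a,c]⊗b⊗d`, the `[r₁₂,s₁₃]` component of the Schouten bracket. -/
noncomputable def s1213 : (M ⊗[k] M) ⊗[k] (M ⊗[k] M) →ₗ[k] M ⊗[k] (M ⊗[k] M) :=
  (TensorProduct.map (brM B) LinearMap.id) ∘ₗ (tensorTensorTensorComm k M M M M).toLinearMap

/-- `(a⊗b)⊗(c⊗d) ↦ a⊗[b,c]⊗d`, the `[r₁₂,s₂₃]` component. -/
noncomputable def s1223 : (M ⊗[k] M) ⊗[k] (M ⊗[k] M) →ₗ[k] M ⊗[k] (M ⊗[k] M) :=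
  (LinearMap.lTensor M ((TensorProduct.map (brM B) LinearMap.id) ∘ₗ
      (TensorProduct.assoc k M M M).symm.toLinearMap)) ∘ₗ
    (TensorProduct.assoc k M M (M ⊗[k] M)).toLinearMap

/-- `(a⊗b)⊗(c⊗d) ↦ a⊗c⊗[b,d]`, the `[r₁₃,s₂₃]` component. -/
noncomputable def s1323 : (M ⊗[k] M) ⊗[k] (M ⊗[k] M) →ₗ[k] M ⊗[k] (M ⊗[k] M) :=
  (LinearMap.lTensor M ((LinearMap.lTensor M (brM B)) ∘ₗ
      ((TensorProduct.assoc k M M M).toLinearMap ∘ₗ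
        (TensorProduct.map (TensorProduct.comm k M M).toLinearMap LinearMap.id) ∘ₗ
          (TensorProduct.assoc k M M M).symm.toLinearMap))) ∘ₗ
    (TensorProduct.assoc k M M (M ⊗[k] M)).toLinearMap

/-- The Schouten bracket `[[r,s]] = [r₁₂,s₁₃] + [r₁₂,s₂₃] + [r₁₃,s₂₃]`. -/
noncomputable def schouten (r s : M ⊗[k] M) : M ⊗[k] (M ⊗[k] M) :=
  (s1213 B) (r ⊗ₜ s) + (s1223 B) (r ⊗ₜ s) + (s1323 B) (r ⊗ₜ s)

/-- The extension of the adjoint-type action `B x` to the tensor square. -/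
noncomputable def adT (x : M) : M ⊗[k] M →ₗ[k] M ⊗[k] M :=
  TensorProduct.map (B x) LinearMap.id + TensorProduct.map LinearMap.id (B x)

/-- The extension of the adjoint-type action `B x` to the triple tensor product. -/
noncomputable def adT3 (x : M) : M ⊗[k] (M ⊗[k] M) →ₗ[k] M ⊗[k] (M ⊗[k] M) :=
  TensorProduct.map (B x) LinearMap.id + LinearMap.lTensor M (adT B x)

/-- The coboundary `δ_r : x ↦ ad_x(r)` of an element `r ∈ M⊗M`, as a linear map. -/
noncomputable def cobdryL (r : M ⊗[k] M) : M →ₗ[k] M ⊗[k] M where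
  toFun x := adT B x r
  map_add' x y := by
    simp [adT, map_add, TensorProduct.map_add_left, TensorProduct.map_add_right,
      LinearMap.add_apply]
    abel
  map_smul' c x := by
    simp [adT, map_smul, TensorProduct.map_smul_left, TensorProduct.map_smul_right,
      LinearMap.add_apply, LinearMap.smul_apply, smul_add]

/-- `B` is a Lie bracket: alternating and satisfying the (Leibniz form of the) Jacobi identity. -/
def IsLieBr : Prop :=
  (∀ x, B x x = 0) ∧ ∀ x y z, B x (B y z) = B (B x y) z + B y (B x z)

/-- Anticocommutativity `δ + τ∘δ = 0`. -/
def Antico (δ : M →ₗ[k] M ⊗[k] M) : Prop := ∀ x, δ x + (τ k M) (δ x) = 0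

/-- The co-Jacobi identity `(δ⊗id)∘δ + cyclic = 0`. -/
def CoJacobi (δ : M →ₗ[k] M ⊗[k] M) : Prop :=
  ∀ x, (TensorProduct.assoc k M M M) ((TensorProduct.map δ LinearMap.id) (δ x)) +
      (ρ k M) ((TensorProduct.assoc k M M M) ((TensorProduct.map δ LinearMap.id) (δ x))) +
      (ρ k M) ((ρ k M) ((TensorProduct.assoc k M M M)
        ((TensorProduct.map δ LinearMap.id) (δ x)))) = 0

/-- The 1-cocycle compatibility `δ[x,y] = ad_x(δ y) − ad_y(δ x)`. -/
def Cocycle (δ : M →ₗ[k] M ⊗[k] M) : Prop :=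
  ∀ x y, δ (B x y) = adT B x (δ y) - adT B y (δ x)

/-- `(M, B, δ)` is a Lie bialgebra. -/
def IsLieBialg (δ : M →ₗ[k] M ⊗[k] M) : Prop :=
  IsLieBr B ∧ Antico δ ∧ CoJacobi δ ∧ Cocycle B δ

/-- The classical Yang–Baxter equation `[[r,r]] = 0`. -/
def CYBE (r : M ⊗[k] M) : Prop := schouten B r r = 0

/-- `(M, B, r)` is a quasitriangular Lie bialgebra: `r` satisfies the CYBE, its symmetric
part is ad-invariant, and the coboundary `δ = ad_•(r)` makes `M` a Lie bialgebra. -/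
def IsQT (r : M ⊗[k] M) : Prop :=
  CYBE B r ∧ (∀ x, adT B x (r + (τ k M) r) = 0) ∧ IsLieBialg B (cobdryL B r)

section contr
variable {N : Type*} [AddCommGroup N] [Module k N]

/-- Contraction against the first tensor factor: `a⊗b ↦ φ(a) • b`. -/
noncomputable def contr1 (φ : Module.Dual k N) : N ⊗[k] N →ₗ[k] N :=
  (TensorProduct.lid k N).toLinearMap ∘ₗ TensorProduct.map φ LinearMap.id

/-- Contraction against the second tensor factor: `a⊗b ↦ φ(b) • a`. -/
noncomputable def contr2 (φ : Module.Dual k N) : N ⊗[k] N →ₗ[k] N :=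
  (TensorProduct.rid k N).toLinearMap ∘ₗ TensorProduct.map LinearMap.id φ

end contr

/-- The bracket on the dual space obtained by dualising a cobracket `δ`. -/
noncomputable def dualBr (δ : M →ₗ[k] M ⊗[k] M) :
    Module.Dual k M →ₗ[k] Module.Dual k M →ₗ[k] Module.Dual k M :=
  LinearMap.compr₂ (TensorProduct.mk k (Module.Dual k M) (Module.Dual k M))
    (δ.dualMap ∘ₗ TensorProduct.dualDistrib k M M)

/-- The cobracket on the dual space obtained by dualising the bracket `B`
(finite-dimensional case). -/
noncomputable def dualCo [FiniteDimensional k M] :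
    Module.Dual k M →ₗ[k] Module.Dual k M ⊗[k] Module.Dual k M :=
  (TensorProduct.dualDistribEquiv k M M).symm.toLinearMap ∘ₗ (brM B).dualMap

end Trip

namespace Trip

variable {k : Type*} [Field k] {M : Type*} [AddCommGroup M] [Module k M]
variable (B : M →ₗ[k] M →ₗ[k] M)

/-- The bracket of the triple `T(g)` on `b ⊕ g ⊕ c` with `b = c = g̲` (factorisable case),
 as a plain function. -/
noncomputable def tbr (u v : M × M × M) : M × M × M :=
  (B u.1 v.1 + B u.1 v.2.1 - B u.1 v.2.2 + B u.2.1 v.1 - B u.2.2 v.1,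
    B u.1 v.2.2 + B u.2.1 v.2.1 + B u.2.2 v.1,
    B u.2.2 v.1 + B u.2.2 v.2.1 - B u.2.2 v.2.2 + B u.2.1 v.2.2 + B u.1 v.2.2)

/-- The bracket of the triple `T(g)`, bundled as a bilinear map. -/
noncomputable def tripleBr : (M × M × M) →ₗ[k] (M × M × M) →ₗ[k] (M × M × M) :=
  LinearMap.mk₂ k (tbr B)
    (fun p p' q => by
      refine Prod.ext ?_ (Prod.ext ?_ ?_) <;>
        simp [tbr, map_add, LinearMap.add_apply] <;> abel)
    (fun c p q => by
      refine Prod.ext ?_ (Prod.ext ?_ ?_) <;>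
        simp [tbr, map_smul, LinearMap.smul_apply, smul_add, smul_sub])
    (fun p q q' => by
      refine Prod.ext ?_ (Prod.ext ?_ ?_) <;>
        simp [tbr, map_add] <;> abel)
    (fun c p q => by
      refine Prod.ext ?_ (Prod.ext ?_ ?_) <;>
        simp [tbr, map_smul, smul_add, smul_sub])

/-- The componentwise (direct sum) Lie bracket on `g ⊕ g ⊕ g`. -/
noncomputable def diagBr : (M × M × M) →ₗ[k] (M × M × M) →ₗ[k] (M × M × M) :=
  LinearMap.mk₂ k (fun p q => (B p.1 q.1, B p.2.1 q.2.1, B p.2.2 q.2.2))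
    (fun p p' q => by
      refine Prod.ext ?_ (Prod.ext ?_ ?_) <;> simp [map_add, LinearMap.add_apply])
    (fun c p q => by
      refine Prod.ext ?_ (Prod.ext ?_ ?_) <;> simp [map_smul, LinearMap.smul_apply])
    (fun p q q' => by refine Prod.ext ?_ (Prod.ext ?_ ?_) <;> simp [map_add])
    (fun c p q => by refine Prod.ext ?_ (Prod.ext ?_ ?_) <;> simp [map_smul])

/-- The Lie subalgebra/ideal `I₋ = {x ⊕ (−x) ⊕ 0}` of `T(g)`. -/
def Iminus : Set (M × M × M) := {u | ∃ x : M, u = (x, -x, 0)}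

/-- The Lie subalgebra/ideal `I₀ = {x ⊕ (−x) ⊕ (−x)}` of `T(g)`. -/
def Izero : Set (M × M × M) := {u | ∃ x : M, u = (x, -x, -x)}

/-- The Lie subalgebra/ideal `I₊ = {0 ⊕ x ⊕ x}` of `T(g)`. -/
def Iplus : Set (M × M × M) := {u | ∃ x : M, u = (0, x, x)}

variable (k M) in
/-- The re-diagonalising isomorphism `θ₂ : b ⊕ g ⊕ c ↦ (b+g) ⊕ (b+g−c) ⊕ (g−c)`. -/
noncomputable def theta2 : (M × M × M) →ₗ[k] (M × M × M) :=
  ((LinearMap.fst k M (M × M) +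
      (LinearMap.fst k M M) ∘ₗ (LinearMap.snd k M (M × M)))).prod
    (((LinearMap.fst k M (M × M) +
        (LinearMap.fst k M M) ∘ₗ (LinearMap.snd k M (M × M))) -
        (LinearMap.snd k M M) ∘ₗ (LinearMap.snd k M (M × M))).prod
      ((LinearMap.fst k M M) ∘ₗ (LinearMap.snd k M (M × M)) -
        (LinearMap.snd k M M) ∘ₗ (LinearMap.snd k M (M × M))))

variable (k M) in
/-- The inclusion of the first copy (`A`) of `g` into `g ⊕ g ⊕ g`. -/
noncomputable def iA : M →ₗ[k] M × M × M := LinearMap.inl k M (M × M)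

variable (k M) in
/-- The inclusion of the second copy (`B`) of `g` into `g ⊕ g ⊕ g`. -/
noncomputable def iB : M →ₗ[k] M × M × M :=
  (LinearMap.inr k M (M × M)) ∘ₗ (LinearMap.inl k M M)

variable (k M) in
/-- The inclusion of the third copy (`C`) of `g` into `g ⊕ g ⊕ g`. -/
noncomputable def iC : M →ₗ[k] M × M × M :=
  (LinearMap.inr k M (M × M)) ∘ₗ (LinearMap.inr k M M)

variable (r : M ⊗[k] M)

/-- `r_XY = (r⁽¹⁾ in copy X) ⊗ (r⁽²⁾ in copy Y)`. -/
noncomputable def rXY (f g : M →ₗ[k] M × M × M) : (M × M × M) ⊗[k] (M × M × M) :=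
  (TensorProduct.map f g) r

/-- The twisting cocycle piece `χ_XY = r_XY − τ(r_XY)`. -/
noncomputable def chiXY (f g : M →ₗ[k] M × M × M) : (M × M × M) ⊗[k] (M × M × M) :=
  rXY r f g - (τ k (M × M × M)) (rXY r f g)

/-- The direct sum quasitriangular structure `r ⊕ (−r₂₁) ⊕ r` on `g ⊕ g ⊕ g`. -/
noncomputable def rTriple : (M × M × M) ⊗[k] (M × M × M) :=
  rXY r (iA k M) (iA k M) - (τ k (M × M × M)) (rXY r (iB k M) (iB k M)) +
    rXY r (iC k M) (iC k M)

/-- The full twisting cocycle `χ = χ_AB + χ_BC + χ_AC`. -/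
noncomputable def chiTriple : (M × M × M) ⊗[k] (M × M × M) :=
  chiXY r (iA k M) (iB k M) + chiXY r (iB k M) (iC k M) + chiXY r (iA k M) (iC k M)

/-- The quasitriangular structure of the triple `T(g)`:
`r_T = 0⊕r⊕0 + Σₐ (0⊕0⊕fᵃ) ⊗ (eₐ⊕0⊕0)`. -/
noncomputable def rT {ι : Type*} [Fintype ι] (e f : ι → M) :
    (M × M × M) ⊗[k] (M × M × M) :=
  rXY r (iB k M) (iB k M) + ∑ a : ι, (iC k M (f a)) ⊗ₜ[k] (iA k M (e a))

end Trip

namespace Trip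

variable {k : Type*} [Field k]
variable {M : Type*} [AddCommGroup M] [Module k M]
variable (B : M →ₗ[k] M →ₗ[k] M)

section Basic

variable {N : Type*} [AddCommGroup N] [Module k N]

lemma tau_tau (t : N ⊗[k] N) : τ k N (τ k N t) = t := by
  refine t.induction_on (by simp) (fun x y => rfl) (fun x y hx hy => by
    simp only [map_add, hx, hy])

lemma tau_map (f g : M →ₗ[k] N) (t : M ⊗[k] M) :
    τ k N (TensorProduct.map f g t) = TensorProduct.map g f (τ k M t) :=
  (TensorProduct.map_comm g f t).symm

lemma map_neg_left {P Q : Type*} [AddCommGroup P] [Module k P]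
    [AddCommGroup Q] [Module k Q] (f : M →ₗ[k] N) (g : P →ₗ[k] Q) :
    TensorProduct.map (-f) g = -TensorProduct.map f g := by
  apply TensorProduct.ext'
  intro x y
  simp [TensorProduct.neg_tmul]

lemma map_neg_right {P Q : Type*} [AddCommGroup P] [Module k P]
    [AddCommGroup Q] [Module k Q] (f : M →ₗ[k] N) (g : P →ₗ[k] Q) :
    TensorProduct.map f (-g) = -TensorProduct.map f g := by
  apply TensorProduct.ext'
  intro x y
  simp [TensorProduct.tmul_neg]

end Basic

section Slot

lemma s1213_tmul_left (x y : M) (w : M ⊗[k] M) :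
    s1213 B ((x ⊗ₜ y) ⊗ₜ w) =
      TensorProduct.map (B x) (TensorProduct.mk k M M y) w := by
  have : (s1213 B) ∘ₗ (TensorProduct.mk k (M ⊗[k] M) (M ⊗[k] M) (x ⊗ₜ y)) =
      TensorProduct.map (B x) (TensorProduct.mk k M M y) := by
    apply TensorProduct.ext'
    intro c d
    simp [s1213, brM]
  exact DFunLike.congr_fun this w

lemma s1223_tmul_left (x y : M) (w : M ⊗[k] M) :
    s1223 B ((x ⊗ₜ y) ⊗ₜ w) =
      x ⊗ₜ (TensorProduct.map (B y) LinearMap.id w) := by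
  have : (s1223 B) ∘ₗ (TensorProduct.mk k (M ⊗[k] M) (M ⊗[k] M) (x ⊗ₜ y)) =
      (TensorProduct.mk k M (M ⊗[k] M) x) ∘ₗ TensorProduct.map (B y) LinearMap.id := by
    apply TensorProduct.ext'
    intro c d
    simp [s1223, brM]
  exact DFunLike.congr_fun this w

lemma s1323_tmul_left (x y : M) (w : M ⊗[k] M) :
    s1323 B ((x ⊗ₜ y) ⊗ₜ w) =
      x ⊗ₜ (TensorProduct.map LinearMap.id (B y) w) := by
  have : (s1323 B) ∘ₗ (TensorProduct.mk k (M ⊗[k] M) (M ⊗[k] M) (x ⊗ₜ y)) =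
      (TensorProduct.mk k M (M ⊗[k] M) x) ∘ₗ TensorProduct.map LinearMap.id (B y) := by
    apply TensorProduct.ext'
    intro c d
    simp [s1323, brM]
  exact DFunLike.congr_fun this w

lemma s1213_tmul_right (x y : M) (w : M ⊗[k] M) :
    s1213 B (w ⊗ₜ (x ⊗ₜ y)) =
      TensorProduct.map (B.flip x) ((TensorProduct.mk k M M).flip y) w := by
  have : (s1213 B) ∘ₗ ((TensorProduct.mk k (M ⊗[k] M) (M ⊗[k] M)).flip (x ⊗ₜ y)) =
      TensorProduct.map (B.flip x) ((TensorProduct.mk k M M).flip y) := by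
    apply TensorProduct.ext'
    intro c d
    simp [s1213, brM]
  exact DFunLike.congr_fun this w

lemma s1223_tmul_right (x y : M) (w : M ⊗[k] M) :
    s1223 B (w ⊗ₜ (x ⊗ₜ y)) =
      TensorProduct.map LinearMap.id
        (((TensorProduct.mk k M M).flip y) ∘ₗ (B.flip x)) w := by
  have : (s1223 B) ∘ₗ ((TensorProduct.mk k (M ⊗[k] M) (M ⊗[k] M)).flip (x ⊗ₜ y)) =
      TensorProduct.map LinearMap.id
        (((TensorProduct.mk k M M).flip y) ∘ₗ (B.flip x)) := by
    apply TensorProduct.ext'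
    intro c d
    simp [s1223, brM]
  exact DFunLike.congr_fun this w

lemma s1323_tmul_right (x y : M) (w : M ⊗[k] M) :
    s1323 B (w ⊗ₜ (x ⊗ₜ y)) =
      TensorProduct.map LinearMap.id
        ((TensorProduct.mk k M M x) ∘ₗ (B.flip y)) w := by
  have : (s1323 B) ∘ₗ ((TensorProduct.mk k (M ⊗[k] M) (M ⊗[k] M)).flip (x ⊗ₜ y)) =
      TensorProduct.map LinearMap.id
        ((TensorProduct.mk k M M x) ∘ₗ (B.flip y)) := by
    apply TensorProduct.ext'
    intro c d
    simp [s1323, brM]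
  exact DFunLike.congr_fun this w

end Slot

section Identities

variable (r : M ⊗[k] M)

lemma antisym (halt : ∀ x, B x x = 0) (x y : M) : B x y = -B y x := by
  have h := halt (x + y)
  simp only [map_add, LinearMap.add_apply, halt x, halt y, zero_add, add_zero] at h
  rw [eq_neg_iff_add_eq_zero, add_comm]
  exact h

lemma flipB_eq (halt : ∀ x, B x x = 0) (x : M) : B.flip x = -(B x) := by
  ext z
  simp [antisym B halt z x]

/-- ad-invariance in the second tensor factor. -/
lemma adinv2 (hinv : ∀ x, adT B x (r + τ k M r) = 0) (s : M ⊗[k] M) :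
    s1223 B (s ⊗ₜ (r + τ k M r)) + s1323 B (s ⊗ₜ (r + τ k M r)) = 0 := by
  set Q := r + τ k M r with hQ
  refine s.induction_on ?_ ?_ ?_
  · simp
  · intro x y
    rw [s1223_tmul_left, s1323_tmul_left, ← TensorProduct.tmul_add]
    have : TensorProduct.map (B y) LinearMap.id Q +
        TensorProduct.map LinearMap.id (B y) Q = adT B y Q := by
      simp [adT]
    rw [this, hinv y, TensorProduct.tmul_zero]
  · intro u v hu hv
    simp only [TensorProduct.add_tmul, map_add]
    calc _ = (s1223 B (u ⊗ₜ Q) + s1323 B (u ⊗ₜ Q)) +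
        (s1223 B (v ⊗ₜ Q) + s1323 B (v ⊗ₜ Q)) := by abel
    _ = 0 := by rw [hu, hv, add_zero]

/-- ad-invariance in the first tensor factor. -/
lemma adinv1 (halt : ∀ x, B x x = 0) (hinv : ∀ x, adT B x (r + τ k M r) = 0)
    (t : M ⊗[k] M) :
    s1213 B ((r + τ k M r) ⊗ₜ t) + s1223 B ((r + τ k M r) ⊗ₜ t) = 0 := by
  set Q := r + τ k M r with hQ
  refine t.induction_on ?_ ?_ ?_
  · simp
  · intro x y
    rw [s1213_tmul_right, s1223_tmul_right, flipB_eq B halt x, map_neg_left]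
    have h1 : TensorProduct.map (B x) ((TensorProduct.mk k M M).flip y) =
        TensorProduct.map (LinearMap.id : M →ₗ[k] M) ((TensorProduct.mk k M M).flip y) ∘ₗ
          TensorProduct.map (B x) LinearMap.id := by
      rw [← TensorProduct.map_comp]
      simp
    have h2 : TensorProduct.map LinearMap.id
        (((TensorProduct.mk k M M).flip y) ∘ₗ (-(B x))) =
        TensorProduct.map (LinearMap.id : M →ₗ[k] M) ((TensorProduct.mk k M M).flip y) ∘ₗ
          TensorProduct.map LinearMap.id (-(B x)) := by
      rw [← TensorProduct.map_comp]
      simp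
    rw [h1, h2, map_neg_right]
    simp only [LinearMap.neg_apply, LinearMap.comp_apply, map_neg]
    rw [← neg_add, ← map_add]
    have : TensorProduct.map (B x) LinearMap.id Q +
        TensorProduct.map LinearMap.id (B x) Q = adT B x Q := by
      simp [adT]
    rw [this, hinv x]
    simp
  · intro u v hu hv
    simp only [TensorProduct.tmul_add, map_add]
    calc _ = (s1213 B (Q ⊗ₜ u) + s1223 B (Q ⊗ₜ u)) +
        (s1213 B (Q ⊗ₜ v) + s1223 B (Q ⊗ₜ v)) := by abel
    _ = 0 := by rw [hu, hv, add_zero]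

/-- the mixed identity `m3(Q ⊗ τs) = m1(s ⊗ Q)`. -/
lemma adinv3 (halt : ∀ x, B x x = 0) (hinv : ∀ x, adT B x (r + τ k M r) = 0)
    (s : M ⊗[k] M) :
    s1323 B ((r + τ k M r) ⊗ₜ (τ k M s)) = s1213 B (s ⊗ₜ (r + τ k M r)) := by
  set Q := r + τ k M r with hQ
  refine s.induction_on ?_ ?_ ?_
  · simp
  · intro x y
    have hτ : τ k M (x ⊗ₜ y) = y ⊗ₜ x := rfl
    rw [hτ, s1323_tmul_right, s1213_tmul_left, flipB_eq B halt x]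
    have h2 : TensorProduct.map LinearMap.id ((TensorProduct.mk k M M y) ∘ₗ (-(B x))) =
        TensorProduct.map (LinearMap.id : M →ₗ[k] M) (TensorProduct.mk k M M y) ∘ₗ
          TensorProduct.map LinearMap.id (-(B x)) := by
      rw [← TensorProduct.map_comp]; simp
    have h4 : TensorProduct.map LinearMap.id (B x) Q =
        -TensorProduct.map (B x) LinearMap.id Q := by
      have : TensorProduct.map (B x) LinearMap.id Q +
          TensorProduct.map LinearMap.id (B x) Q = adT B x Q := by simp [adT]
      have h0 := hinv x
      rw [← this] at h0
      exact eq_neg_of_add_eq_zero_right h0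
    have h5 : TensorProduct.map (B x) (TensorProduct.mk k M M y) =
        TensorProduct.map (LinearMap.id : M →ₗ[k] M) (TensorProduct.mk k M M y) ∘ₗ
          TensorProduct.map (B x) LinearMap.id := by
      rw [← TensorProduct.map_comp]; simp
    rw [h2, map_neg_right, h5]
    simp only [LinearMap.comp_apply, LinearMap.neg_apply, map_neg]
    rw [h4]
    simp
  · intro u v hu hv
    simp only [TensorProduct.tmul_add, TensorProduct.add_tmul, map_add, hu, hv]

end Identities

section Flip

variable (k M) in
/-- Reversal `x⊗y⊗z ↦ z⊗y⊗x`. -/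
noncomputable def revT : M ⊗[k] (M ⊗[k] M) →ₗ[k] M ⊗[k] (M ⊗[k] M) :=
  (LinearMap.lTensor M (TensorProduct.comm k M M).toLinearMap) ∘ₗ
    ((TensorProduct.comm k (M ⊗[k] M) M).toLinearMap ∘ₗ
      (TensorProduct.assoc k M M M).symm.toLinearMap)

@[simp] lemma revT_tmul (x y z : M) :
    revT k M (x ⊗ₜ (y ⊗ₜ z)) = z ⊗ₜ (y ⊗ₜ x) := by
  simp [revT]

lemma flip1213 (halt : ∀ x, B x x = 0) (s t : M ⊗[k] M) :
    s1213 B ((τ k M s) ⊗ₜ (τ k M t)) = - revT k M (s1323 B (t ⊗ₜ s)) := by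
  have key : (s1213 B) ∘ₗ TensorProduct.map (τ k M).toLinearMap (τ k M).toLinearMap =
      (-(revT k M ∘ₗ (s1323 B) ∘ₗ
        (TensorProduct.comm k (M ⊗[k] M) (M ⊗[k] M)).toLinearMap)) := by
    apply TensorProduct.ext_fourfold'
    intro a b c d
    simp [s1213, s1323, brM, τ]
    rw [antisym B halt d b]
    simp [TensorProduct.neg_tmul]
  have := DFunLike.congr_fun key (s ⊗ₜ t)
  simpa using this

lemma flip1223 (halt : ∀ x, B x x = 0) (s t : M ⊗[k] M) :
    s1223 B ((τ k M s) ⊗ₜ (τ k M t)) = - revT k M (s1223 B (t ⊗ₜ s)) := by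
  have key : (s1223 B) ∘ₗ TensorProduct.map (τ k M).toLinearMap (τ k M).toLinearMap =
      (-(revT k M ∘ₗ (s1223 B) ∘ₗ
        (TensorProduct.comm k (M ⊗[k] M) (M ⊗[k] M)).toLinearMap)) := by
    apply TensorProduct.ext_fourfold'
    intro a b c d
    simp [s1223, brM, τ]
    rw [antisym B halt d a]
    simp [TensorProduct.neg_tmul, TensorProduct.tmul_neg]
  have := DFunLike.congr_fun key (s ⊗ₜ t)
  simpa using this

lemma flip1323 (halt : ∀ x, B x x = 0) (s t : M ⊗[k] M) :
    s1323 B ((τ k M s) ⊗ₜ (τ k M t)) = - revT k M (s1213 B (t ⊗ₜ s)) := by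
  have key : (s1323 B) ∘ₗ TensorProduct.map (τ k M).toLinearMap (τ k M).toLinearMap =
      (-(revT k M ∘ₗ (s1213 B) ∘ₗ
        (TensorProduct.comm k (M ⊗[k] M) (M ⊗[k] M)).toLinearMap)) := by
    apply TensorProduct.ext_fourfold'
    intro a b c d
    simp [s1213, s1323, brM, τ]
    rw [antisym B halt c a]
    simp [TensorProduct.neg_tmul, TensorProduct.tmul_neg]
  have := DFunLike.congr_fun key (s ⊗ₜ t)
  simpa using this

end Flip

section Buckets

variable (r : M ⊗[k] M)

/-- CYBE for `τ r`. -/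
lemma bI6 (halt : ∀ x, B x x = 0)
    (hJ : s1213 B (r ⊗ₜ r) + s1223 B (r ⊗ₜ r) + s1323 B (r ⊗ₜ r) = 0) : s1213 B (τ k M r ⊗ₜ τ k M r) + s1223 B (τ k M r ⊗ₜ τ k M r) +
    s1323 B (τ k M r ⊗ₜ τ k M r) = 0 := by
  rw [flip1213 B halt, flip1223 B halt, flip1323 B halt]
  have h0 : s1323 B (r ⊗ₜ r) + s1223 B (r ⊗ₜ r) + s1213 B (r ⊗ₜ r) = 0 := by
    rw [← hJ]; abel
  calc -revT k M (s1323 B (r ⊗ₜ r)) + -revT k M (s1223 B (r ⊗ₜ r)) +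
      -revT k M (s1213 B (r ⊗ₜ r))
      = -revT k M (s1323 B (r ⊗ₜ r) + s1223 B (r ⊗ₜ r) + s1213 B (r ⊗ₜ r)) := by
        simp only [map_add]; abel
    _ = 0 := by rw [h0]; simp

/-- `m1(r,r) − m2(r,τr) − m3(r,τr) = 0`. -/
lemma bI2 (hinv : ∀ x, adT B x (r + τ k M r) = 0)
    (hJ : s1213 B (r ⊗ₜ r) + s1223 B (r ⊗ₜ r) + s1323 B (r ⊗ₜ r) = 0) : s1213 B (r ⊗ₜ r) - s1223 B (r ⊗ₜ τ k M r) - s1323 B (r ⊗ₜ τ k M r) = 0 := by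
  have e2 := adinv2 B r hinv r
  simp only [TensorProduct.tmul_add, map_add] at e2
  calc s1213 B (r ⊗ₜ r) - s1223 B (r ⊗ₜ τ k M r) - s1323 B (r ⊗ₜ τ k M r)
      = (s1213 B (r ⊗ₜ r) + s1223 B (r ⊗ₜ r) + s1323 B (r ⊗ₜ r)) -
        (s1223 B (r ⊗ₜ r) + s1223 B (r ⊗ₜ τ k M r) +
          (s1323 B (r ⊗ₜ r) + s1323 B (r ⊗ₜ τ k M r))) := by abel
    _ = 0 := by rw [hJ, e2]; simp

/-- `m3(r,r) − m1(τr,r) − m2(τr,r) = 0`. -/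
lemma bI3 (halt : ∀ x, B x x = 0) (hinv : ∀ x, adT B x (r + τ k M r) = 0)
    (hJ : s1213 B (r ⊗ₜ r) + s1223 B (r ⊗ₜ r) + s1323 B (r ⊗ₜ r) = 0) : s1323 B (r ⊗ₜ r) - s1213 B (τ k M r ⊗ₜ r) - s1223 B (τ k M r ⊗ₜ r) = 0 := by
  have e1 := adinv1 B r halt hinv r
  simp only [TensorProduct.add_tmul, map_add] at e1
  calc s1323 B (r ⊗ₜ r) - s1213 B (τ k M r ⊗ₜ r) - s1223 B (τ k M r ⊗ₜ r)
      = (s1213 B (r ⊗ₜ r) + s1223 B (r ⊗ₜ r) + s1323 B (r ⊗ₜ r)) -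
        (s1213 B (r ⊗ₜ r) + s1213 B (τ k M r ⊗ₜ r) +
          (s1223 B (r ⊗ₜ r) + s1223 B (τ k M r ⊗ₜ r))) := by abel
    _ = 0 := by rw [hJ, e1]; simp

/-- `m3(τr,τr) − m1(r,τr) − m2(r,τr) = 0`. -/
lemma bI4 (halt : ∀ x, B x x = 0) (hinv : ∀ x, adT B x (r + τ k M r) = 0)
    (hJ : s1213 B (r ⊗ₜ r) + s1223 B (r ⊗ₜ r) + s1323 B (r ⊗ₜ r) = 0) : s1323 B (τ k M r ⊗ₜ τ k M r) - s1213 B (r ⊗ₜ τ k M r) -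
    s1223 B (r ⊗ₜ τ k M r) = 0 := by
  have e3 := adinv3 B r halt hinv r
  simp only [TensorProduct.tmul_add, TensorProduct.add_tmul, map_add] at e3
  have i2 := bI2 B r hinv hJ
  calc s1323 B (τ k M r ⊗ₜ τ k M r) - s1213 B (r ⊗ₜ τ k M r) - s1223 B (r ⊗ₜ τ k M r)
      = ((s1323 B (r ⊗ₜ τ k M r) + s1323 B (τ k M r ⊗ₜ τ k M r)) -
          (s1213 B (r ⊗ₜ r) + s1213 B (r ⊗ₜ τ k M r))) +
        (s1213 B (r ⊗ₜ r) - s1223 B (r ⊗ₜ τ k M r) - s1323 B (r ⊗ₜ τ k M r)) := by abel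
    _ = 0 := by rw [e3, i2]; simp

/-- `m1(τr,τr) − m2(τr,r) − m3(τr,r) = 0`. -/
lemma bI5 (halt : ∀ x, B x x = 0) (hinv : ∀ x, adT B x (r + τ k M r) = 0)
    (hJ : s1213 B (r ⊗ₜ r) + s1223 B (r ⊗ₜ r) + s1323 B (r ⊗ₜ r) = 0) : s1213 B (τ k M r ⊗ₜ τ k M r) - s1223 B (τ k M r ⊗ₜ r) -
    s1323 B (τ k M r ⊗ₜ r) = 0 := by
  have e2 := adinv2 B r hinv (τ k M r)
  simp only [TensorProduct.tmul_add, map_add] at e2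
  have i6 := bI6 B r halt hJ
  calc s1213 B (τ k M r ⊗ₜ τ k M r) - s1223 B (τ k M r ⊗ₜ r) - s1323 B (τ k M r ⊗ₜ r)
      = (s1213 B (τ k M r ⊗ₜ τ k M r) + s1223 B (τ k M r ⊗ₜ τ k M r) +
          s1323 B (τ k M r ⊗ₜ τ k M r)) -
        (s1223 B (τ k M r ⊗ₜ r) + s1223 B (τ k M r ⊗ₜ τ k M r) +
          (s1323 B (τ k M r ⊗ₜ r) + s1323 B (τ k M r ⊗ₜ τ k M r))) := by abel
    _ = 0 := by rw [i6, e2]; simp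

end Buckets

section Funct

variable {N : Type*} [AddCommGroup N] [Module k N]
variable (B' : N →ₗ[k] N →ₗ[k] N)

lemma s1213_map (f g f' g' j : M →ₗ[k] N) (hb : ∀ a c, B' (f a) (f' c) = j (B a c))
    (u v : M ⊗[k] M) :
    s1213 B' ((TensorProduct.map f g u) ⊗ₜ (TensorProduct.map f' g' v)) =
      TensorProduct.map j (TensorProduct.map g g') (s1213 B (u ⊗ₜ v)) := by
  have key : s1213 B' ∘ₗ
      TensorProduct.map (TensorProduct.map f g) (TensorProduct.map f' g') =
      (TensorProduct.map j (TensorProduct.map g g')) ∘ₗ s1213 B := by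
    apply TensorProduct.ext_fourfold'
    intro a b c d
    simp [s1213, brM, hb]
  have := DFunLike.congr_fun key (u ⊗ₜ v)
  simpa using this

lemma s1213_map0 (f g f' g' : M →ₗ[k] N) (hb : ∀ a c, B' (f a) (f' c) = 0)
    (u v : M ⊗[k] M) :
    s1213 B' ((TensorProduct.map f g u) ⊗ₜ (TensorProduct.map f' g' v)) = 0 := by
  have key : s1213 B' ∘ₗ
      TensorProduct.map (TensorProduct.map f g) (TensorProduct.map f' g') = 0 := by
    apply TensorProduct.ext_fourfold'
    intro a b c d
    simp [s1213, brM, hb]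
  have := DFunLike.congr_fun key (u ⊗ₜ v)
  simpa using this

lemma s1223_map (f g f' g' j : M →ₗ[k] N) (hb : ∀ a c, B' (g a) (f' c) = j (B a c))
    (u v : M ⊗[k] M) :
    s1223 B' ((TensorProduct.map f g u) ⊗ₜ (TensorProduct.map f' g' v)) =
      TensorProduct.map f (TensorProduct.map j g') (s1223 B (u ⊗ₜ v)) := by
  have key : s1223 B' ∘ₗ
      TensorProduct.map (TensorProduct.map f g) (TensorProduct.map f' g') =
      (TensorProduct.map f (TensorProduct.map j g')) ∘ₗ s1223 B := by
    apply TensorProduct.ext_fourfold'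
    intro a b c d
    simp [s1223, brM, hb]
  have := DFunLike.congr_fun key (u ⊗ₜ v)
  simpa using this

lemma s1223_map0 (f g f' g' : M →ₗ[k] N) (hb : ∀ a c, B' (g a) (f' c) = 0)
    (u v : M ⊗[k] M) :
    s1223 B' ((TensorProduct.map f g u) ⊗ₜ (TensorProduct.map f' g' v)) = 0 := by
  have key : s1223 B' ∘ₗ
      TensorProduct.map (TensorProduct.map f g) (TensorProduct.map f' g') = 0 := by
    apply TensorProduct.ext_fourfold'
    intro a b c d
    simp [s1223, brM, hb]
  have := DFunLike.congr_fun key (u ⊗ₜ v)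
  simpa using this

lemma s1323_map (f g f' g' j : M →ₗ[k] N) (hb : ∀ a c, B' (g a) (g' c) = j (B a c))
    (u v : M ⊗[k] M) :
    s1323 B' ((TensorProduct.map f g u) ⊗ₜ (TensorProduct.map f' g' v)) =
      TensorProduct.map f (TensorProduct.map f' j) (s1323 B (u ⊗ₜ v)) := by
  have key : s1323 B' ∘ₗ
      TensorProduct.map (TensorProduct.map f g) (TensorProduct.map f' g') =
      (TensorProduct.map f (TensorProduct.map f' j)) ∘ₗ s1323 B := by
    apply TensorProduct.ext_fourfold'
    intro a b c d
    simp [s1323, brM, hb]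
  have := DFunLike.congr_fun key (u ⊗ₜ v)
  simpa using this

lemma s1323_map0 (f g f' g' : M →ₗ[k] N) (hb : ∀ a c, B' (g a) (g' c) = 0)
    (u v : M ⊗[k] M) :
    s1323 B' ((TensorProduct.map f g u) ⊗ₜ (TensorProduct.map f' g' v)) = 0 := by
  have key : s1323 B' ∘ₗ
      TensorProduct.map (TensorProduct.map f g) (TensorProduct.map f' g') = 0 := by
    apply TensorProduct.ext_fourfold'
    intro a b c d
    simp [s1323, brM, hb]
  have := DFunLike.congr_fun key (u ⊗ₜ v)
  simpa using this

end Funct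

section DiagIncl

lemma diag_AA (x y : M) :
    diagBr B (iA k M x) (iA k M y) = iA k M (B x y) := by
  simp [diagBr, iA, iB, iC]

lemma diag_AB (x y : M) :
    diagBr B (iA k M x) (iB k M y) = 0 := by
  simp [diagBr, iA, iB, iC]


lemma diag_AC (x y : M) :
    diagBr B (iA k M x) (iC k M y) = 0 := by
  simp [diagBr, iA, iB, iC]


lemma diag_BA (x y : M) :
    diagBr B (iB k M x) (iA k M y) = 0 := by
  simp [diagBr, iA, iB, iC]


lemma diag_BB (x y : M) :
    diagBr B (iB k M x) (iB k M y) = iB k M (B x y) := by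
  simp [diagBr, iA, iB, iC]

lemma diag_BC (x y : M) :
    diagBr B (iB k M x) (iC k M y) = 0 := by
  simp [diagBr, iA, iB, iC]


lemma diag_CA (x y : M) :
    diagBr B (iC k M x) (iA k M y) = 0 := by
  simp [diagBr, iA, iB, iC]


lemma diag_CB (x y : M) :
    diagBr B (iC k M x) (iB k M y) = 0 := by
  simp [diagBr, iA, iB, iC]


lemma diag_CC (x y : M) :
    diagBr B (iC k M x) (iC k M y) = iC k M (B x y) := by
  simp [diagBr, iA, iB, iC]

lemma p13AA (g g' : M →ₗ[k] M × M × M) (u v : M ⊗[k] M) :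
    s1213 (diagBr B) ((TensorProduct.map (iA k M) g u) ⊗ₜ (TensorProduct.map (iA k M) g' v)) =
      TensorProduct.map (iA k M) (TensorProduct.map g g') (s1213 B (u ⊗ₜ v)) :=
  s1213_map B (diagBr B) _ g _ g' _ (diag_AA B) u v

lemma p23AA (f g' : M →ₗ[k] M × M × M) (u v : M ⊗[k] M) :
    s1223 (diagBr B) ((TensorProduct.map f (iA k M) u) ⊗ₜ (TensorProduct.map (iA k M) g' v)) =
      TensorProduct.map f (TensorProduct.map (iA k M) g') (s1223 B (u ⊗ₜ v)) :=
  s1223_map B (diagBr B) f _ _ g' _ (diag_AA B) u v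

lemma p33AA (f f' : M →ₗ[k] M × M × M) (u v : M ⊗[k] M) :
    s1323 (diagBr B) ((TensorProduct.map f (iA k M) u) ⊗ₜ (TensorProduct.map f' (iA k M) v)) =
      TensorProduct.map f (TensorProduct.map f' (iA k M)) (s1323 B (u ⊗ₜ v)) :=
  s1323_map B (diagBr B) f _ f' _ _ (diag_AA B) u v

lemma p13AB (g g' : M →ₗ[k] M × M × M) (u v : M ⊗[k] M) :
    s1213 (diagBr B) ((TensorProduct.map (iA k M) g u) ⊗ₜ (TensorProduct.map (iB k M) g' v)) = 0 :=
  s1213_map0 (diagBr B) _ g _ g' (diag_AB B) u v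

lemma p23AB (f g' : M →ₗ[k] M × M × M) (u v : M ⊗[k] M) :
    s1223 (diagBr B) ((TensorProduct.map f (iA k M) u) ⊗ₜ (TensorProduct.map (iB k M) g' v)) = 0 :=
  s1223_map0 (diagBr B) f _ _ g' (diag_AB B) u v

lemma p33AB (f f' : M →ₗ[k] M × M × M) (u v : M ⊗[k] M) :
    s1323 (diagBr B) ((TensorProduct.map f (iA k M) u) ⊗ₜ (TensorProduct.map f' (iB k M) v)) = 0 :=
  s1323_map0 (diagBr B) f _ f' _ (diag_AB B) u v

lemma p13AC (g g' : M →ₗ[k] M × M × M) (u v : M ⊗[k] M) :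
    s1213 (diagBr B) ((TensorProduct.map (iA k M) g u) ⊗ₜ (TensorProduct.map (iC k M) g' v)) = 0 :=
  s1213_map0 (diagBr B) _ g _ g' (diag_AC B) u v

lemma p23AC (f g' : M →ₗ[k] M × M × M) (u v : M ⊗[k] M) :
    s1223 (diagBr B) ((TensorProduct.map f (iA k M) u) ⊗ₜ (TensorProduct.map (iC k M) g' v)) = 0 :=
  s1223_map0 (diagBr B) f _ _ g' (diag_AC B) u v

lemma p33AC (f f' : M →ₗ[k] M × M × M) (u v : M ⊗[k] M) :
    s1323 (diagBr B) ((TensorProduct.map f (iA k M) u) ⊗ₜ (TensorProduct.map f' (iC k M) v)) = 0 :=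
  s1323_map0 (diagBr B) f _ f' _ (diag_AC B) u v

lemma p13BA (g g' : M →ₗ[k] M × M × M) (u v : M ⊗[k] M) :
    s1213 (diagBr B) ((TensorProduct.map (iB k M) g u) ⊗ₜ (TensorProduct.map (iA k M) g' v)) = 0 :=
  s1213_map0 (diagBr B) _ g _ g' (diag_BA B) u v

lemma p23BA (f g' : M →ₗ[k] M × M × M) (u v : M ⊗[k] M) :
    s1223 (diagBr B) ((TensorProduct.map f (iB k M) u) ⊗ₜ (TensorProduct.map (iA k M) g' v)) = 0 :=
  s1223_map0 (diagBr B) f _ _ g' (diag_BA B) u v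

lemma p33BA (f f' : M →ₗ[k] M × M × M) (u v : M ⊗[k] M) :
    s1323 (diagBr B) ((TensorProduct.map f (iB k M) u) ⊗ₜ (TensorProduct.map f' (iA k M) v)) = 0 :=
  s1323_map0 (diagBr B) f _ f' _ (diag_BA B) u v

lemma p13BB (g g' : M →ₗ[k] M × M × M) (u v : M ⊗[k] M) :
    s1213 (diagBr B) ((TensorProduct.map (iB k M) g u) ⊗ₜ (TensorProduct.map (iB k M) g' v)) =
      TensorProduct.map (iB k M) (TensorProduct.map g g') (s1213 B (u ⊗ₜ v)) :=
  s1213_map B (diagBr B) _ g _ g' _ (diag_BB B) u v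

lemma p23BB (f g' : M →ₗ[k] M × M × M) (u v : M ⊗[k] M) :
    s1223 (diagBr B) ((TensorProduct.map f (iB k M) u) ⊗ₜ (TensorProduct.map (iB k M) g' v)) =
      TensorProduct.map f (TensorProduct.map (iB k M) g') (s1223 B (u ⊗ₜ v)) :=
  s1223_map B (diagBr B) f _ _ g' _ (diag_BB B) u v

lemma p33BB (f f' : M →ₗ[k] M × M × M) (u v : M ⊗[k] M) :
    s1323 (diagBr B) ((TensorProduct.map f (iB k M) u) ⊗ₜ (TensorProduct.map f' (iB k M) v)) =
      TensorProduct.map f (TensorProduct.map f' (iB k M)) (s1323 B (u ⊗ₜ v)) :=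
  s1323_map B (diagBr B) f _ f' _ _ (diag_BB B) u v

lemma p13BC (g g' : M →ₗ[k] M × M × M) (u v : M ⊗[k] M) :
    s1213 (diagBr B) ((TensorProduct.map (iB k M) g u) ⊗ₜ (TensorProduct.map (iC k M) g' v)) = 0 :=
  s1213_map0 (diagBr B) _ g _ g' (diag_BC B) u v

lemma p23BC (f g' : M →ₗ[k] M × M × M) (u v : M ⊗[k] M) :
    s1223 (diagBr B) ((TensorProduct.map f (iB k M) u) ⊗ₜ (TensorProduct.map (iC k M) g' v)) = 0 :=
  s1223_map0 (diagBr B) f _ _ g' (diag_BC B) u v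

lemma p33BC (f f' : M →ₗ[k] M × M × M) (u v : M ⊗[k] M) :
    s1323 (diagBr B) ((TensorProduct.map f (iB k M) u) ⊗ₜ (TensorProduct.map f' (iC k M) v)) = 0 :=
  s1323_map0 (diagBr B) f _ f' _ (diag_BC B) u v

lemma p13CA (g g' : M →ₗ[k] M × M × M) (u v : M ⊗[k] M) :
    s1213 (diagBr B) ((TensorProduct.map (iC k M) g u) ⊗ₜ (TensorProduct.map (iA k M) g' v)) = 0 :=
  s1213_map0 (diagBr B) _ g _ g' (diag_CA B) u v

lemma p23CA (f g' : M →ₗ[k] M × M × M) (u v : M ⊗[k] M) :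
    s1223 (diagBr B) ((TensorProduct.map f (iC k M) u) ⊗ₜ (TensorProduct.map (iA k M) g' v)) = 0 :=
  s1223_map0 (diagBr B) f _ _ g' (diag_CA B) u v

lemma p33CA (f f' : M →ₗ[k] M × M × M) (u v : M ⊗[k] M) :
    s1323 (diagBr B) ((TensorProduct.map f (iC k M) u) ⊗ₜ (TensorProduct.map f' (iA k M) v)) = 0 :=
  s1323_map0 (diagBr B) f _ f' _ (diag_CA B) u v

lemma p13CB (g g' : M →ₗ[k] M × M × M) (u v : M ⊗[k] M) :
    s1213 (diagBr B) ((TensorProduct.map (iC k M) g u) ⊗ₜ (TensorProduct.map (iB k M) g' v)) = 0 :=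
  s1213_map0 (diagBr B) _ g _ g' (diag_CB B) u v

lemma p23CB (f g' : M →ₗ[k] M × M × M) (u v : M ⊗[k] M) :
    s1223 (diagBr B) ((TensorProduct.map f (iC k M) u) ⊗ₜ (TensorProduct.map (iB k M) g' v)) = 0 :=
  s1223_map0 (diagBr B) f _ _ g' (diag_CB B) u v

lemma p33CB (f f' : M →ₗ[k] M × M × M) (u v : M ⊗[k] M) :
    s1323 (diagBr B) ((TensorProduct.map f (iC k M) u) ⊗ₜ (TensorProduct.map f' (iB k M) v)) = 0 :=
  s1323_map0 (diagBr B) f _ f' _ (diag_CB B) u v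

lemma p13CC (g g' : M →ₗ[k] M × M × M) (u v : M ⊗[k] M) :
    s1213 (diagBr B) ((TensorProduct.map (iC k M) g u) ⊗ₜ (TensorProduct.map (iC k M) g' v)) =
      TensorProduct.map (iC k M) (TensorProduct.map g g') (s1213 B (u ⊗ₜ v)) :=
  s1213_map B (diagBr B) _ g _ g' _ (diag_CC B) u v

lemma p23CC (f g' : M →ₗ[k] M × M × M) (u v : M ⊗[k] M) :
    s1223 (diagBr B) ((TensorProduct.map f (iC k M) u) ⊗ₜ (TensorProduct.map (iC k M) g' v)) =
      TensorProduct.map f (TensorProduct.map (iC k M) g') (s1223 B (u ⊗ₜ v)) :=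
  s1223_map B (diagBr B) f _ _ g' _ (diag_CC B) u v

lemma p33CC (f f' : M →ₗ[k] M × M × M) (u v : M ⊗[k] M) :
    s1323 (diagBr B) ((TensorProduct.map f (iC k M) u) ⊗ₜ (TensorProduct.map f' (iC k M) v)) =
      TensorProduct.map f (TensorProduct.map f' (iC k M)) (s1323 B (u ⊗ₜ v)) :=
  s1323_map B (diagBr B) f _ f' _ _ (diag_CC B) u v

end DiagIncl

section Theta

lemma theta_iA : theta2 k M ∘ₗ iA k M = iA k M + iB k M := by
  refine LinearMap.ext fun x => ?_
  refine Prod.ext ?_ (Prod.ext ?_ ?_) <;>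
    simp [theta2, iA, iB, iC]

lemma theta_iB : theta2 k M ∘ₗ iB k M = iA k M + iB k M + iC k M := by
  refine LinearMap.ext fun x => ?_
  refine Prod.ext ?_ (Prod.ext ?_ ?_) <;>
    simp [theta2, iA, iB, iC]

lemma theta_iC : theta2 k M ∘ₗ iC k M = -(iB k M + iC k M) := by
  refine LinearMap.ext fun x => ?_
  refine Prod.ext ?_ (Prod.ext ?_ ?_) <;>
    simp [theta2, iA, iB, iC]

end Theta

lemma cobdryL_apply (B : M →ₗ[k] M →ₗ[k] M) (r : M ⊗[k] M) (x : M) :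
    cobdryL B r x = adT B x r := rfl

end Trip
namespace Trip
set_option maxHeartbeats 2000000 in
theorem statement16_aux {k : Type*} [Field k] {M : Type*} [AddCommGroup M] [Module k M]
    [FiniteDimensional k M] (B : M →ₗ[k] M →ₗ[k] M) (r : M ⊗[k] M) (h : Trip.IsQT B r)
    (hfact : Function.Surjective fun φ : Module.Dual k M =>
      Trip.contr2 φ (r + (Trip.τ k M) r))
    {ι : Type*} [Fintype ι] (bas : Basis ι k M) (e f : ι → M) (he : ∀ a, e a = bas a)
    (hq : ∑ a : ι, f a ⊗ₜ[k] e a = r + (Trip.τ k M) r) :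
    -- θ₂ is a Lie algebra isomorphism of T(g) with g⊕g⊕g
    Function.Bijective (Trip.theta2 k M) ∧
    (∀ u v : M × M × M,
      Trip.theta2 k M (Trip.tripleBr B u v) =
        Trip.diagBr B (Trip.theta2 k M u) (Trip.theta2 k M v)) ∧
    -- the quasitriangular structure of T(g) is that of D(g) ⊕ g = (g⊕g)_{χ_AB} ⊕ g,
    -- twisted further by χ_AC + χ_BC
    (TensorProduct.map (Trip.theta2 k M) (Trip.theta2 k M)) (Trip.rT r e f) =
        (Trip.rTriple r + Trip.chiXY r (Trip.iA k M) (Trip.iB k M)) +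
          (Trip.chiXY r (Trip.iA k M) (Trip.iC k M) +
            Trip.chiXY r (Trip.iB k M) (Trip.iC k M)) ∧
    -- χ_AC + χ_BC is a valid twisting cocycle for the quasitriangular structure of D(g) ⊕ g
    (Trip.chiXY r (Trip.iA k M) (Trip.iC k M) + Trip.chiXY r (Trip.iB k M) (Trip.iC k M)) +
        (Trip.τ k (M × M × M)) (Trip.chiXY r (Trip.iA k M) (Trip.iC k M) +
          Trip.chiXY r (Trip.iB k M) (Trip.iC k M)) = 0 ∧
    Trip.schouten (Trip.diagBr B)
        (Trip.rTriple r + Trip.chiXY r (Trip.iA k M) (Trip.iB k M))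
        (Trip.chiXY r (Trip.iA k M) (Trip.iC k M) + Trip.chiXY r (Trip.iB k M) (Trip.iC k M))
      + Trip.schouten (Trip.diagBr B)
        (Trip.chiXY r (Trip.iA k M) (Trip.iC k M) + Trip.chiXY r (Trip.iB k M) (Trip.iC k M))
        (Trip.rTriple r + Trip.chiXY r (Trip.iA k M) (Trip.iB k M))
      + Trip.schouten (Trip.diagBr B)
        (Trip.chiXY r (Trip.iA k M) (Trip.iC k M) + Trip.chiXY r (Trip.iB k M) (Trip.iC k M))
        (Trip.chiXY r (Trip.iA k M) (Trip.iC k M) + Trip.chiXY r (Trip.iB k M) (Trip.iC k M))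
        = 0 ∧
    -- the cobracket of T(g) corresponds to the twisted cobracket
    (∀ u : M × M × M,
      (TensorProduct.map (Trip.theta2 k M) (Trip.theta2 k M))
          (Trip.cobdryL (Trip.tripleBr B) (Trip.rT r e f) u) =
        Trip.cobdryL (Trip.diagBr B)
          ((Trip.rTriple r + Trip.chiXY r (Trip.iA k M) (Trip.iB k M)) +
            (Trip.chiXY r (Trip.iA k M) (Trip.iC k M) +
              Trip.chiXY r (Trip.iB k M) (Trip.iC k M)))
          (Trip.theta2 k M u)) := by
  obtain ⟨hcybe, hinv, hbialg⟩ := h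
  have halt : ∀ x, B x x = 0 := hbialg.1.1
  have hJ : s1213 B (r ⊗ₜ[k] r) + s1223 B (r ⊗ₜ[k] r) + s1323 B (r ⊗ₜ[k] r) = 0 := hcybe
  -- conjunct 1
  have c1 : Function.Bijective (theta2 k M) := by
    refine Function.bijective_iff_has_inverse.mpr
      ⟨fun u => (u.2.1 - u.2.2, u.1 - u.2.1 + u.2.2, u.1 - u.2.1), fun u => ?_, fun u => ?_⟩
    · refine Prod.ext ?_ (Prod.ext ?_ ?_) <;> simp [theta2] <;> abel
    · refine Prod.ext ?_ (Prod.ext ?_ ?_) <;> simp [theta2] <;> abel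
  -- conjunct 2
  have c2 : ∀ u v : M × M × M,
      theta2 k M (tripleBr B u v) = diagBr B (theta2 k M u) (theta2 k M v) := by
    intro u v
    refine Prod.ext ?_ (Prod.ext ?_ ?_) <;>
      simp [theta2, tripleBr, diagBr, tbr, map_add, map_sub, LinearMap.add_apply,
        LinearMap.sub_apply] <;>
      abel
  -- conjunct 3
  have c3 : (TensorProduct.map (theta2 k M) (theta2 k M)) (rT r e f) =
      (rTriple r + chiXY r (iA k M) (iB k M)) +
        (chiXY r (iA k M) (iC k M) + chiXY r (iB k M) (iC k M)) := by
    have h1 : ∀ a : ι, TensorProduct.map (theta2 k M) (theta2 k M)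
        ((iC k M) (f a) ⊗ₜ[k] (iA k M) (e a)) =
        TensorProduct.map (theta2 k M ∘ₗ iC k M) (theta2 k M ∘ₗ iA k M)
          (f a ⊗ₜ[k] e a) := fun a => by simp
    have h2 : TensorProduct.map (theta2 k M) (theta2 k M)
        (TensorProduct.map (iB k M) (iB k M) r) =
        TensorProduct.map (theta2 k M ∘ₗ iB k M) (theta2 k M ∘ₗ iB k M) r := by
      rw [TensorProduct.map_comp]; rfl
    rw [rT, rXY, map_add, map_sum, h2, theta_iB]
    simp only [h1, theta_iC, theta_iA]
    rw [← map_sum, hq]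
    simp only [rTriple, chiXY, rXY, tau_map, map_neg_left, TensorProduct.map_add_left,
      TensorProduct.map_add_right, LinearMap.add_apply, LinearMap.neg_apply, map_add]
    abel
  -- conjunct 4
  have c4 : (chiXY r (iA k M) (iC k M) + chiXY r (iB k M) (iC k M)) +
      (τ k (M × M × M)) (chiXY r (iA k M) (iC k M) + chiXY r (iB k M) (iC k M)) = 0 := by
    simp only [chiXY, map_add, map_sub, tau_tau]
    abel
  -- conjunct 5
  have c5 : schouten (diagBr B)
      (rTriple r + chiXY r (iA k M) (iB k M))
      (chiXY r (iA k M) (iC k M) + chiXY r (iB k M) (iC k M))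
    + schouten (diagBr B)
      (chiXY r (iA k M) (iC k M) + chiXY r (iB k M) (iC k M))
      (rTriple r + chiXY r (iA k M) (iB k M))
    + schouten (diagBr B)
      (chiXY r (iA k M) (iC k M) + chiXY r (iB k M) (iC k M))
      (chiXY r (iA k M) (iC k M) + chiXY r (iB k M) (iC k M)) = 0 := by
    have i2 := bI2 B r hinv hJ
    have i3 := bI3 B r halt hinv hJ
    have i4 := bI4 B r halt hinv hJ
    have i5 := bI5 B r halt hinv hJ
    have i6 := bI6 B r halt hJ
    have hS : rTriple r + chiXY r (iA k M) (iB k M) =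
        TensorProduct.map (iA k M) (iA k M) r -
          TensorProduct.map (iB k M) (iB k M) (τ k M r) +
          TensorProduct.map (iC k M) (iC k M) r +
          TensorProduct.map (iA k M) (iB k M) r -
          TensorProduct.map (iB k M) (iA k M) (τ k M r) := by
      simp only [rTriple, chiXY, rXY, tau_map]
      abel
    have hX : chiXY r (iA k M) (iC k M) + chiXY r (iB k M) (iC k M) =
        TensorProduct.map (iA k M) (iC k M) r -
          TensorProduct.map (iC k M) (iA k M) (τ k M r) +
          TensorProduct.map (iB k M) (iC k M) r -
          TensorProduct.map (iC k M) (iB k M) (τ k M r) := by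
      simp only [chiXY, rXY, tau_map]
      abel
    rw [hS, hX]
    simp only [schouten, TensorProduct.add_tmul, TensorProduct.sub_tmul,
      TensorProduct.tmul_add, TensorProduct.tmul_sub, map_add, map_sub]
    simp only [p13AA B, p23AA B, p33AA B, p13AB B, p23AB B, p33AB B, p13AC B, p23AC B, p33AC B, p13BA B, p23BA B, p33BA B, p13BB B, p23BB B, p33BB B, p13BC B, p23BC B, p33BC B, p13CA B, p23CA B, p33CA B, p13CB B, p23CB B, p33CB B, p13CC B, p23CC B, p33CC B]
    simp only [add_zero, zero_add, sub_zero, zero_sub, neg_zero, neg_neg]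
    have hb1 : TensorProduct.map (iA k M) (TensorProduct.map (iA k M) (iC k M)) (s1213 B (r ⊗ₜ[k] r)) +
      TensorProduct.map (iA k M) (TensorProduct.map (iA k M) (iC k M)) (s1223 B (r ⊗ₜ[k] r)) +
      TensorProduct.map (iA k M) (TensorProduct.map (iA k M) (iC k M)) (s1323 B (r ⊗ₜ[k] r)) = 0 := by
      simpa using congrArg (⇑(TensorProduct.map (iA k M) (TensorProduct.map (iA k M) (iC k M)))) hJ
    have hb2 : TensorProduct.map (iA k M) (TensorProduct.map (iC k M) (iA k M)) (s1213 B (r ⊗ₜ[k] r)) -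
      TensorProduct.map (iA k M) (TensorProduct.map (iC k M) (iA k M)) (s1223 B (r ⊗ₜ[k] (τ k M r))) -
      TensorProduct.map (iA k M) (TensorProduct.map (iC k M) (iA k M)) (s1323 B (r ⊗ₜ[k] (τ k M r))) = 0 := by
      simpa using congrArg (⇑(TensorProduct.map (iA k M) (TensorProduct.map (iC k M) (iA k M)))) i2
    have hb3 : TensorProduct.map (iB k M) (TensorProduct.map (iB k M) (iC k M)) (s1323 B (r ⊗ₜ[k] r)) -
      TensorProduct.map (iB k M) (TensorProduct.map (iB k M) (iC k M)) (s1213 B ((τ k M r) ⊗ₜ[k] r)) -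
      TensorProduct.map (iB k M) (TensorProduct.map (iB k M) (iC k M)) (s1223 B ((τ k M r) ⊗ₜ[k] r)) = 0 := by
      simpa using congrArg (⇑(TensorProduct.map (iB k M) (TensorProduct.map (iB k M) (iC k M)))) i3
    have hb4 : TensorProduct.map (iB k M) (TensorProduct.map (iC k M) (iB k M)) (s1323 B ((τ k M r) ⊗ₜ[k] (τ k M r))) -
      TensorProduct.map (iB k M) (TensorProduct.map (iC k M) (iB k M)) (s1213 B (r ⊗ₜ[k] (τ k M r))) -
      TensorProduct.map (iB k M) (TensorProduct.map (iC k M) (iB k M)) (s1223 B (r ⊗ₜ[k] (τ k M r))) = 0 := by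
      simpa using congrArg (⇑(TensorProduct.map (iB k M) (TensorProduct.map (iC k M) (iB k M)))) i4
    have hb5 : TensorProduct.map (iC k M) (TensorProduct.map (iA k M) (iC k M)) (s1323 B (r ⊗ₜ[k] r)) -
      TensorProduct.map (iC k M) (TensorProduct.map (iA k M) (iC k M)) (s1213 B ((τ k M r) ⊗ₜ[k] r)) -
      TensorProduct.map (iC k M) (TensorProduct.map (iA k M) (iC k M)) (s1223 B ((τ k M r) ⊗ₜ[k] r)) = 0 := by
      simpa using congrArg (⇑(TensorProduct.map (iC k M) (TensorProduct.map (iA k M) (iC k M)))) i3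
    have hb6 : TensorProduct.map (iC k M) (TensorProduct.map (iC k M) (iA k M)) (s1323 B ((τ k M r) ⊗ₜ[k] (τ k M r))) -
      TensorProduct.map (iC k M) (TensorProduct.map (iC k M) (iA k M)) (s1213 B (r ⊗ₜ[k] (τ k M r))) -
      TensorProduct.map (iC k M) (TensorProduct.map (iC k M) (iA k M)) (s1223 B (r ⊗ₜ[k] (τ k M r))) = 0 := by
      simpa using congrArg (⇑(TensorProduct.map (iC k M) (TensorProduct.map (iC k M) (iA k M)))) i4
    have hb7 : TensorProduct.map (iC k M) (TensorProduct.map (iB k M) (iC k M)) (s1323 B (r ⊗ₜ[k] r)) -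
      TensorProduct.map (iC k M) (TensorProduct.map (iB k M) (iC k M)) (s1213 B ((τ k M r) ⊗ₜ[k] r)) -
      TensorProduct.map (iC k M) (TensorProduct.map (iB k M) (iC k M)) (s1223 B ((τ k M r) ⊗ₜ[k] r)) = 0 := by
      simpa using congrArg (⇑(TensorProduct.map (iC k M) (TensorProduct.map (iB k M) (iC k M)))) i3
    have hb8 : TensorProduct.map (iC k M) (TensorProduct.map (iC k M) (iB k M)) (s1323 B ((τ k M r) ⊗ₜ[k] (τ k M r))) -
      TensorProduct.map (iC k M) (TensorProduct.map (iC k M) (iB k M)) (s1213 B (r ⊗ₜ[k] (τ k M r))) -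
      TensorProduct.map (iC k M) (TensorProduct.map (iC k M) (iB k M)) (s1223 B (r ⊗ₜ[k] (τ k M r))) = 0 := by
      simpa using congrArg (⇑(TensorProduct.map (iC k M) (TensorProduct.map (iC k M) (iB k M)))) i4
    have hb9 : TensorProduct.map (iA k M) (TensorProduct.map (iB k M) (iC k M)) (s1213 B (r ⊗ₜ[k] r)) +
      TensorProduct.map (iA k M) (TensorProduct.map (iB k M) (iC k M)) (s1223 B (r ⊗ₜ[k] r)) +
      TensorProduct.map (iA k M) (TensorProduct.map (iB k M) (iC k M)) (s1323 B (r ⊗ₜ[k] r)) = 0 := by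
      simpa using congrArg (⇑(TensorProduct.map (iA k M) (TensorProduct.map (iB k M) (iC k M)))) hJ
    have hb10 : TensorProduct.map (iA k M) (TensorProduct.map (iC k M) (iB k M)) (s1213 B (r ⊗ₜ[k] r)) -
      TensorProduct.map (iA k M) (TensorProduct.map (iC k M) (iB k M)) (s1223 B (r ⊗ₜ[k] (τ k M r))) -
      TensorProduct.map (iA k M) (TensorProduct.map (iC k M) (iB k M)) (s1323 B (r ⊗ₜ[k] (τ k M r))) = 0 := by
      simpa using congrArg (⇑(TensorProduct.map (iA k M) (TensorProduct.map (iC k M) (iB k M)))) i2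
    have hb11 : TensorProduct.map (iB k M) (TensorProduct.map (iA k M) (iC k M)) (s1323 B (r ⊗ₜ[k] r)) -
      TensorProduct.map (iB k M) (TensorProduct.map (iA k M) (iC k M)) (s1213 B ((τ k M r) ⊗ₜ[k] r)) -
      TensorProduct.map (iB k M) (TensorProduct.map (iA k M) (iC k M)) (s1223 B ((τ k M r) ⊗ₜ[k] r)) = 0 := by
      simpa using congrArg (⇑(TensorProduct.map (iB k M) (TensorProduct.map (iA k M) (iC k M)))) i3
    have hb12 : TensorProduct.map (iB k M) (TensorProduct.map (iC k M) (iA k M)) (s1323 B ((τ k M r) ⊗ₜ[k] (τ k M r))) -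
      TensorProduct.map (iB k M) (TensorProduct.map (iC k M) (iA k M)) (s1213 B (r ⊗ₜ[k] (τ k M r))) -
      TensorProduct.map (iB k M) (TensorProduct.map (iC k M) (iA k M)) (s1223 B (r ⊗ₜ[k] (τ k M r))) = 0 := by
      simpa using congrArg (⇑(TensorProduct.map (iB k M) (TensorProduct.map (iC k M) (iA k M)))) i4
    have hb13 : TensorProduct.map (iA k M) (TensorProduct.map (iC k M) (iC k M)) (s1213 B (r ⊗ₜ[k] r)) +
      TensorProduct.map (iA k M) (TensorProduct.map (iC k M) (iC k M)) (s1223 B (r ⊗ₜ[k] r)) +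
      TensorProduct.map (iA k M) (TensorProduct.map (iC k M) (iC k M)) (s1323 B (r ⊗ₜ[k] r)) = 0 := by
      simpa using congrArg (⇑(TensorProduct.map (iA k M) (TensorProduct.map (iC k M) (iC k M)))) hJ
    have hb14 : TensorProduct.map (iC k M) (TensorProduct.map (iA k M) (iA k M)) (s1213 B ((τ k M r) ⊗ₜ[k] (τ k M r))) -
      TensorProduct.map (iC k M) (TensorProduct.map (iA k M) (iA k M)) (s1223 B ((τ k M r) ⊗ₜ[k] r)) -
      TensorProduct.map (iC k M) (TensorProduct.map (iA k M) (iA k M)) (s1323 B ((τ k M r) ⊗ₜ[k] r)) = 0 := by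
      simpa using congrArg (⇑(TensorProduct.map (iC k M) (TensorProduct.map (iA k M) (iA k M)))) i5
    have hb15 : TensorProduct.map (iC k M) (TensorProduct.map (iA k M) (iB k M)) (s1213 B ((τ k M r) ⊗ₜ[k] (τ k M r))) -
      TensorProduct.map (iC k M) (TensorProduct.map (iA k M) (iB k M)) (s1223 B ((τ k M r) ⊗ₜ[k] r)) -
      TensorProduct.map (iC k M) (TensorProduct.map (iA k M) (iB k M)) (s1323 B ((τ k M r) ⊗ₜ[k] r)) = 0 := by
      simpa using congrArg (⇑(TensorProduct.map (iC k M) (TensorProduct.map (iA k M) (iB k M)))) i5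
    have hb16 : TensorProduct.map (iC k M) (TensorProduct.map (iB k M) (iA k M)) (s1213 B ((τ k M r) ⊗ₜ[k] (τ k M r))) +
      TensorProduct.map (iC k M) (TensorProduct.map (iB k M) (iA k M)) (s1223 B ((τ k M r) ⊗ₜ[k] (τ k M r))) +
      TensorProduct.map (iC k M) (TensorProduct.map (iB k M) (iA k M)) (s1323 B ((τ k M r) ⊗ₜ[k] (τ k M r))) = 0 := by
      simpa using congrArg (⇑(TensorProduct.map (iC k M) (TensorProduct.map (iB k M) (iA k M)))) i6
    have hb17 : TensorProduct.map (iB k M) (TensorProduct.map (iC k M) (iC k M)) (s1213 B (r ⊗ₜ[k] r)) +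
      TensorProduct.map (iB k M) (TensorProduct.map (iC k M) (iC k M)) (s1223 B (r ⊗ₜ[k] r)) +
      TensorProduct.map (iB k M) (TensorProduct.map (iC k M) (iC k M)) (s1323 B (r ⊗ₜ[k] r)) = 0 := by
      simpa using congrArg (⇑(TensorProduct.map (iB k M) (TensorProduct.map (iC k M) (iC k M)))) hJ
    have hb18 : TensorProduct.map (iC k M) (TensorProduct.map (iB k M) (iB k M)) (s1213 B ((τ k M r) ⊗ₜ[k] (τ k M r))) +
      TensorProduct.map (iC k M) (TensorProduct.map (iB k M) (iB k M)) (s1223 B ((τ k M r) ⊗ₜ[k] (τ k M r))) +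
      TensorProduct.map (iC k M) (TensorProduct.map (iB k M) (iB k M)) (s1323 B ((τ k M r) ⊗ₜ[k] (τ k M r))) = 0 := by
      simpa using congrArg (⇑(TensorProduct.map (iC k M) (TensorProduct.map (iB k M) (iB k M)))) i6
    have K : (TensorProduct.map (iA k M) (TensorProduct.map (iA k M) (iC k M)) (s1213 B (r ⊗ₜ[k] r)) +
      TensorProduct.map (iA k M) (TensorProduct.map (iA k M) (iC k M)) (s1223 B (r ⊗ₜ[k] r)) +
      TensorProduct.map (iA k M) (TensorProduct.map (iA k M) (iC k M)) (s1323 B (r ⊗ₜ[k] r))) +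
      (TensorProduct.map (iA k M) (TensorProduct.map (iC k M) (iA k M)) (s1213 B (r ⊗ₜ[k] r)) -
      TensorProduct.map (iA k M) (TensorProduct.map (iC k M) (iA k M)) (s1223 B (r ⊗ₜ[k] (τ k M r))) -
      TensorProduct.map (iA k M) (TensorProduct.map (iC k M) (iA k M)) (s1323 B (r ⊗ₜ[k] (τ k M r)))) +
      (TensorProduct.map (iB k M) (TensorProduct.map (iB k M) (iC k M)) (s1323 B (r ⊗ₜ[k] r)) -
      TensorProduct.map (iB k M) (TensorProduct.map (iB k M) (iC k M)) (s1213 B ((τ k M r) ⊗ₜ[k] r)) -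
      TensorProduct.map (iB k M) (TensorProduct.map (iB k M) (iC k M)) (s1223 B ((τ k M r) ⊗ₜ[k] r))) +
      (TensorProduct.map (iB k M) (TensorProduct.map (iC k M) (iB k M)) (s1323 B ((τ k M r) ⊗ₜ[k] (τ k M r))) -
      TensorProduct.map (iB k M) (TensorProduct.map (iC k M) (iB k M)) (s1213 B (r ⊗ₜ[k] (τ k M r))) -
      TensorProduct.map (iB k M) (TensorProduct.map (iC k M) (iB k M)) (s1223 B (r ⊗ₜ[k] (τ k M r)))) +
      (TensorProduct.map (iC k M) (TensorProduct.map (iA k M) (iC k M)) (s1323 B (r ⊗ₜ[k] r)) -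
      TensorProduct.map (iC k M) (TensorProduct.map (iA k M) (iC k M)) (s1213 B ((τ k M r) ⊗ₜ[k] r)) -
      TensorProduct.map (iC k M) (TensorProduct.map (iA k M) (iC k M)) (s1223 B ((τ k M r) ⊗ₜ[k] r))) +
      (TensorProduct.map (iC k M) (TensorProduct.map (iC k M) (iA k M)) (s1323 B ((τ k M r) ⊗ₜ[k] (τ k M r))) -
      TensorProduct.map (iC k M) (TensorProduct.map (iC k M) (iA k M)) (s1213 B (r ⊗ₜ[k] (τ k M r))) -
      TensorProduct.map (iC k M) (TensorProduct.map (iC k M) (iA k M)) (s1223 B (r ⊗ₜ[k] (τ k M r)))) +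
      (TensorProduct.map (iC k M) (TensorProduct.map (iB k M) (iC k M)) (s1323 B (r ⊗ₜ[k] r)) -
      TensorProduct.map (iC k M) (TensorProduct.map (iB k M) (iC k M)) (s1213 B ((τ k M r) ⊗ₜ[k] r)) -
      TensorProduct.map (iC k M) (TensorProduct.map (iB k M) (iC k M)) (s1223 B ((τ k M r) ⊗ₜ[k] r))) +
      (TensorProduct.map (iC k M) (TensorProduct.map (iC k M) (iB k M)) (s1323 B ((τ k M r) ⊗ₜ[k] (τ k M r))) -
      TensorProduct.map (iC k M) (TensorProduct.map (iC k M) (iB k M)) (s1213 B (r ⊗ₜ[k] (τ k M r))) -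
      TensorProduct.map (iC k M) (TensorProduct.map (iC k M) (iB k M)) (s1223 B (r ⊗ₜ[k] (τ k M r)))) +
      (TensorProduct.map (iA k M) (TensorProduct.map (iB k M) (iC k M)) (s1213 B (r ⊗ₜ[k] r)) +
      TensorProduct.map (iA k M) (TensorProduct.map (iB k M) (iC k M)) (s1223 B (r ⊗ₜ[k] r)) +
      TensorProduct.map (iA k M) (TensorProduct.map (iB k M) (iC k M)) (s1323 B (r ⊗ₜ[k] r))) +
      (TensorProduct.map (iA k M) (TensorProduct.map (iC k M) (iB k M)) (s1213 B (r ⊗ₜ[k] r)) -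
      TensorProduct.map (iA k M) (TensorProduct.map (iC k M) (iB k M)) (s1223 B (r ⊗ₜ[k] (τ k M r))) -
      TensorProduct.map (iA k M) (TensorProduct.map (iC k M) (iB k M)) (s1323 B (r ⊗ₜ[k] (τ k M r)))) +
      (TensorProduct.map (iB k M) (TensorProduct.map (iA k M) (iC k M)) (s1323 B (r ⊗ₜ[k] r)) -
      TensorProduct.map (iB k M) (TensorProduct.map (iA k M) (iC k M)) (s1213 B ((τ k M r) ⊗ₜ[k] r)) -
      TensorProduct.map (iB k M) (TensorProduct.map (iA k M) (iC k M)) (s1223 B ((τ k M r) ⊗ₜ[k] r))) +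
      (TensorProduct.map (iB k M) (TensorProduct.map (iC k M) (iA k M)) (s1323 B ((τ k M r) ⊗ₜ[k] (τ k M r))) -
      TensorProduct.map (iB k M) (TensorProduct.map (iC k M) (iA k M)) (s1213 B (r ⊗ₜ[k] (τ k M r))) -
      TensorProduct.map (iB k M) (TensorProduct.map (iC k M) (iA k M)) (s1223 B (r ⊗ₜ[k] (τ k M r)))) +
      (TensorProduct.map (iA k M) (TensorProduct.map (iC k M) (iC k M)) (s1213 B (r ⊗ₜ[k] r)) +
      TensorProduct.map (iA k M) (TensorProduct.map (iC k M) (iC k M)) (s1223 B (r ⊗ₜ[k] r)) +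
      TensorProduct.map (iA k M) (TensorProduct.map (iC k M) (iC k M)) (s1323 B (r ⊗ₜ[k] r))) +
      (TensorProduct.map (iC k M) (TensorProduct.map (iA k M) (iA k M)) (s1213 B ((τ k M r) ⊗ₜ[k] (τ k M r))) -
      TensorProduct.map (iC k M) (TensorProduct.map (iA k M) (iA k M)) (s1223 B ((τ k M r) ⊗ₜ[k] r)) -
      TensorProduct.map (iC k M) (TensorProduct.map (iA k M) (iA k M)) (s1323 B ((τ k M r) ⊗ₜ[k] r))) +
      (TensorProduct.map (iC k M) (TensorProduct.map (iA k M) (iB k M)) (s1213 B ((τ k M r) ⊗ₜ[k] (τ k M r))) -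
      TensorProduct.map (iC k M) (TensorProduct.map (iA k M) (iB k M)) (s1223 B ((τ k M r) ⊗ₜ[k] r)) -
      TensorProduct.map (iC k M) (TensorProduct.map (iA k M) (iB k M)) (s1323 B ((τ k M r) ⊗ₜ[k] r))) +
      (TensorProduct.map (iC k M) (TensorProduct.map (iB k M) (iA k M)) (s1213 B ((τ k M r) ⊗ₜ[k] (τ k M r))) +
      TensorProduct.map (iC k M) (TensorProduct.map (iB k M) (iA k M)) (s1223 B ((τ k M r) ⊗ₜ[k] (τ k M r))) +
      TensorProduct.map (iC k M) (TensorProduct.map (iB k M) (iA k M)) (s1323 B ((τ k M r) ⊗ₜ[k] (τ k M r)))) +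
      (TensorProduct.map (iB k M) (TensorProduct.map (iC k M) (iC k M)) (s1213 B (r ⊗ₜ[k] r)) +
      TensorProduct.map (iB k M) (TensorProduct.map (iC k M) (iC k M)) (s1223 B (r ⊗ₜ[k] r)) +
      TensorProduct.map (iB k M) (TensorProduct.map (iC k M) (iC k M)) (s1323 B (r ⊗ₜ[k] r))) +
      (TensorProduct.map (iC k M) (TensorProduct.map (iB k M) (iB k M)) (s1213 B ((τ k M r) ⊗ₜ[k] (τ k M r))) +
      TensorProduct.map (iC k M) (TensorProduct.map (iB k M) (iB k M)) (s1223 B ((τ k M r) ⊗ₜ[k] (τ k M r))) +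
      TensorProduct.map (iC k M) (TensorProduct.map (iB k M) (iB k M)) (s1323 B ((τ k M r) ⊗ₜ[k] (τ k M r)))) = (0 : (M × M × M) ⊗[k] ((M × M × M) ⊗[k] (M × M × M))) := by
      rw [hb1, hb2, hb3, hb4, hb5, hb6, hb7, hb8, hb9, hb10, hb11, hb12, hb13, hb14, hb15, hb16, hb17, hb18]
      simp
    conv_rhs => rw [← K]
    abel
  -- conjunct 6
  have c6 : ∀ u : M × M × M,
      (TensorProduct.map (theta2 k M) (theta2 k M))
          (cobdryL (tripleBr B) (rT r e f) u) =
        cobdryL (diagBr B)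
          ((rTriple r + chiXY r (iA k M) (iB k M)) +
            (chiXY r (iA k M) (iC k M) + chiXY r (iB k M) (iC k M)))
          (theta2 k M u) := by
    intro u
    have key : TensorProduct.map (theta2 k M) (theta2 k M)
        (adT (tripleBr B) u (rT r e f)) =
        adT (diagBr B) (theta2 k M u)
          (TensorProduct.map (theta2 k M) (theta2 k M) (rT r e f)) := by
      simp only [adT, LinearMap.add_apply, map_add]
      congr 1
      · have e1 : TensorProduct.map (theta2 k M) (theta2 k M) ∘ₗ
            TensorProduct.map (tripleBr B u) LinearMap.id =
            TensorProduct.map (diagBr B (theta2 k M u)) LinearMap.id ∘ₗ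
              TensorProduct.map (theta2 k M) (theta2 k M) := by
          apply TensorProduct.ext'
          intro x y
          simp only [LinearMap.comp_apply, TensorProduct.map_tmul, LinearMap.id_coe, id_eq]
          rw [c2]
        exact DFunLike.congr_fun e1 (rT r e f)
      · have e2 : TensorProduct.map (theta2 k M) (theta2 k M) ∘ₗ
            TensorProduct.map LinearMap.id (tripleBr B u) =
            TensorProduct.map LinearMap.id (diagBr B (theta2 k M u)) ∘ₗ
              TensorProduct.map (theta2 k M) (theta2 k M) := by
          apply TensorProduct.ext'
          intro x y
          simp only [LinearMap.comp_apply, TensorProduct.map_tmul, LinearMap.id_coe, id_eq]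
          rw [c2]
        exact DFunLike.congr_fun e2 (rT r e f)
    rw [cobdryL_apply, cobdryL_apply, key, c3]
  exact ⟨c1, c2, c3, c4, c5, c6⟩

end Trip

/-- For factorisable `g`, `T(g) ≅ D(g) ▶◀ g` as Lie bialgebras: under
`θ₂`, `T(g)` is the twisting of `D(g) ⊕ g` by the cocycle `χ_AC + χ_BC`, where `D(g)` is
identified with the twisting `(g⊕g)_{χ_AB}` of the first two copies of `g`. -/
theorem statement16 {k : Type*} [Field k] {M : Type*} [AddCommGroup M] [Module k M]
    [FiniteDimensional k M] (B : M →ₗ[k] M →ₗ[k] M) (r : M ⊗[k] M) (h : Trip.IsQT B r)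
    (hfact : Function.Surjective fun φ : Module.Dual k M =>
      Trip.contr2 φ (r + (Trip.τ k M) r))
    {ι : Type*} [Fintype ι] (bas : Basis ι k M) (e f : ι → M) (he : ∀ a, e a = bas a)
    (hq : ∑ a : ι, f a ⊗ₜ[k] e a = r + (Trip.τ k M) r) :
    -- θ₂ is a Lie algebra isomorphism of T(g) with g⊕g⊕g
    Function.Bijective (Trip.theta2 k M) ∧
    (∀ u v : M × M × M,
      Trip.theta2 k M (Trip.tripleBr B u v) =
        Trip.diagBr B (Trip.theta2 k M u) (Trip.theta2 k M v)) ∧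
    -- the quasitriangular structure of T(g) is that of D(g) ⊕ g = (g⊕g)_{χ_AB} ⊕ g,
    -- twisted further by χ_AC + χ_BC
    (TensorProduct.map (Trip.theta2 k M) (Trip.theta2 k M)) (Trip.rT r e f) =
        (Trip.rTriple r + Trip.chiXY r (Trip.iA k M) (Trip.iB k M)) +
          (Trip.chiXY r (Trip.iA k M) (Trip.iC k M) +
            Trip.chiXY r (Trip.iB k M) (Trip.iC k M)) ∧
    -- χ_AC + χ_BC is a valid twisting cocycle for the quasitriangular structure of D(g) ⊕ g
    (Trip.chiXY r (Trip.iA k M) (Trip.iC k M) + Trip.chiXY r (Trip.iB k M) (Trip.iC k M)) +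
        (Trip.τ k (M × M × M)) (Trip.chiXY r (Trip.iA k M) (Trip.iC k M) +
          Trip.chiXY r (Trip.iB k M) (Trip.iC k M)) = 0 ∧
    Trip.schouten (Trip.diagBr B)
        (Trip.rTriple r + Trip.chiXY r (Trip.iA k M) (Trip.iB k M))
        (Trip.chiXY r (Trip.iA k M) (Trip.iC k M) + Trip.chiXY r (Trip.iB k M) (Trip.iC k M))
      + Trip.schouten (Trip.diagBr B)
        (Trip.chiXY r (Trip.iA k M) (Trip.iC k M) + Trip.chiXY r (Trip.iB k M) (Trip.iC k M))
        (Trip.rTriple r + Trip.chiXY r (Trip.iA k M) (Trip.iB k M))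
      + Trip.schouten (Trip.diagBr B)
        (Trip.chiXY r (Trip.iA k M) (Trip.iC k M) + Trip.chiXY r (Trip.iB k M) (Trip.iC k M))
        (Trip.chiXY r (Trip.iA k M) (Trip.iC k M) + Trip.chiXY r (Trip.iB k M) (Trip.iC k M))
        = 0 ∧
    -- the cobracket of T(g) corresponds to the twisted cobracket
    (∀ u : M × M × M,
      (TensorProduct.map (Trip.theta2 k M) (Trip.theta2 k M))
          (Trip.cobdryL (Trip.tripleBr B) (Trip.rT r e f) u) =
        Trip.cobdryL (Trip.diagBr B)
          ((Trip.rTriple r + Trip.chiXY r (Trip.iA k M) (Trip.iB k M)) +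
            (Trip.chiXY r (Trip.iA k M) (Trip.iC k M) +
              Trip.chiXY r (Trip.iB k M) (Trip.iC k M)))
          (Trip.theta2 k M u)) :=
  Trip.statement16_aux B r h hfact bas e f he hq
end

section
/- Let g be a complex factorisable Lie bialgebra and (u, r) a half-real form of g with r of real type (i.e. 2r₊ = r + τ(r) has real structure constants). Then the transmutation u̲, with the bracket of u and braided cobracket δ̲x = 2r₊⁽¹⁾ ⊗ [x, r₊⁽²⁾], has real bracket and real cobracket structure constants. -/
open TensorProduct LinearMap Module

namespace Trip

variable {k : Type*} [Field k] {M : Type*} [AddCommGroup M] [Module k M]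
variable (B : M →ₗ[k] M →ₗ[k] M)

/-- The braided cobracket of the transmutation: `δ̲x = 2r₊⁽¹⁾ ⊗ [x, r₊⁽²⁾]`. -/
noncomputable def bco (r : M ⊗[k] M) : M →ₗ[k] M ⊗[k] M where
  toFun x := (LinearMap.lTensor M (B x)) (r + (τ k M) r)
  map_add' x y := by
    simp [map_add, LinearMap.lTensor_add, LinearMap.add_apply]; abel
  map_smul' c x := by
    simp [map_smul, LinearMap.lTensor_smul, LinearMap.smul_apply]

/-- The action of an element `t ∈ g⊗g` on `M⊗M`, each tensor factor of `t` acting on the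
corresponding factor: `(x⊗y) ▷ (a⊗b) = [x,a]⊗[y,b]`. -/
noncomputable def actOf (t : M ⊗[k] M) : M ⊗[k] M →ₗ[k] M ⊗[k] M :=
  TensorProduct.lift (LinearMap.mk₂ k (fun x y => TensorProduct.map (B x) (B y))
    (fun x x' y => by simp [map_add, TensorProduct.map_add_left])
    (fun c x y => by simp [map_smul, TensorProduct.map_smul_left])
    (fun x y y' => by simp [map_add, TensorProduct.map_add_right])
    (fun c x y => by simp [map_smul, TensorProduct.map_smul_right])) t

/-- The infinitesimal braiding `ψ(a⊗b) = 2r₊ ▷ (a⊗b − b⊗a)`. -/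
noncomputable def infBr (r : M ⊗[k] M) (a b : M) : M ⊗[k] M :=
  actOf B (r + (τ k M) r) (a ⊗ₜ b - b ⊗ₜ a)

end Trip

/-- Let `g` be a complex factorisable Lie bialgebra and `(u, r)` a half-real
form of `g` (real bracket structure constants, imaginary cobracket structure constants) with
`r` of real type (`2r₊` real).  Then the transmutation `u̲`, with the bracket of `u` and
braided cobracket `δ̲x = 2r₊⁽¹⁾ ⊗ [x, r₊⁽²⁾]`, has real bracket and real cobracket structure
constants. -/
theorem statement17 {M : Type*} [AddCommGroup M] [Module ℂ M] [FiniteDimensional ℂ M]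
    {ι : Type*} (bas : Basis ι ℂ M) (B : M →ₗ[ℂ] M →ₗ[ℂ] M) (r : M ⊗[ℂ] M)
    (hqt : Trip.IsQT B r)
    (hfact : Function.Surjective fun φ : Module.Dual ℂ M =>
      Trip.contr2 φ (r + (Trip.τ ℂ M) r))
    -- the real span of the chosen basis, and of the induced basis of the tensor square
    (U : Submodule ℝ M) (hU : U = Submodule.span ℝ (Set.range bas))
    (U2 : Submodule ℝ (M ⊗[ℂ] M))
    (hU2 : U2 = Submodule.span ℝ (Set.range fun p : ι × ι => bas p.1 ⊗ₜ[ℂ] bas p.2))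
    -- half-real form: real bracket constants, imaginary cobracket constants
    (hbr : ∀ i j, B (bas i) (bas j) ∈ U)
    (hco : ∀ i, ∃ t ∈ U2, Trip.cobdryL B r (bas i) = Complex.I • t)
    -- `r` of real type: the symmetric part `2r₊` is real
    (hreal : r + (Trip.τ ℂ M) r ∈ U2) :
    (∀ x ∈ U, ∀ y ∈ U, B x y ∈ U) ∧ (∀ x ∈ U, Trip.bco B r x ∈ U2) := by
  subst hU hU2
  have key : ∀ x ∈ Submodule.span ℝ (Set.range bas), ∀ y ∈ Submodule.span ℝ (Set.range bas),
      B x y ∈ Submodule.span ℝ (Set.range bas) := by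
    intro x hx
    induction hx using Submodule.span_induction with
    | mem x hx =>
      obtain ⟨i, rfl⟩ := hx
      intro y hy
      induction hy using Submodule.span_induction with
      | mem y hy => obtain ⟨j, rfl⟩ := hy; exact hbr i j
      | zero => simp
      | add a b _ _ ha hb => simpa [map_add] using Submodule.add_mem _ ha hb
      | smul c a _ ha =>
        simpa [LinearMap.map_smul_of_tower] using Submodule.smul_mem _ c ha
    | zero => intro y hy; simp
    | add a b _ _ ha hb =>
      intro y hy
      simpa [map_add] using Submodule.add_mem _ (ha y hy) (hb y hy)
    | smul c a _ ha =>
      intro y hy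
      simpa [LinearMap.map_smul_of_tower] using Submodule.smul_mem _ c (ha y hy)
  refine ⟨key, ?_⟩
  intro x hx
  show (LinearMap.lTensor M (B x)) (r + (Trip.τ ℂ M) r) ∈ _
  have tm : ∀ (i : ι), ∀ u ∈ Submodule.span ℝ (Set.range bas),
      bas i ⊗ₜ[ℂ] u ∈ Submodule.span ℝ (Set.range fun p : ι × ι => bas p.1 ⊗ₜ[ℂ] bas p.2) := by
    intro i u hu
    induction hu using Submodule.span_induction with
    | mem u hu =>
      obtain ⟨j, rfl⟩ := hu
      exact Submodule.subset_span ⟨(i, j), rfl⟩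
    | zero => simp
    | add a b _ _ ha hb => simpa [TensorProduct.tmul_add] using Submodule.add_mem _ ha hb
    | smul c a _ ha => simpa [TensorProduct.tmul_smul] using Submodule.smul_mem _ c ha
  have gen : ∀ s ∈ Submodule.span ℝ (Set.range fun p : ι × ι => bas p.1 ⊗ₜ[ℂ] bas p.2),
      (LinearMap.lTensor M (B x)) s ∈
        Submodule.span ℝ (Set.range fun p : ι × ι => bas p.1 ⊗ₜ[ℂ] bas p.2) := by
    intro s hs
    induction hs using Submodule.span_induction with
    | mem t ht =>
      obtain ⟨⟨i, j⟩, rfl⟩ := ht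
      simpa using tm i _ (key x hx (bas j) (Submodule.subset_span ⟨j, rfl⟩))
    | zero => simp
    | add a b _ _ ha hb => simpa [map_add] using Submodule.add_mem _ ha hb
    | smul c a _ ha =>
      simpa [LinearMap.map_smul_of_tower] using Submodule.smul_mem _ c ha
  exact gen _ hreal
end
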